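/- Let M be a left A-module with a flat connection ∇ with respect to the universal differential calculus on A. Then the operation m·a := a m − Σ m_A a m_M makes M an A-bimodule; explicitly, for all a, b ∈ A and m ∈ M: (i) m·1 = m, (ii) (m·a)·b = m·(ab), and (iii) (a m)·b = a (m·b). -/

import Mathlib

/-! Regard `A ⊗ M` as a left `A`-module through its first factor. The connection axiom then
reads `∇(a m) = a ∇m + 1 ⊗ a m − a ⊗ m`, and summing it gives a Leibniz rule for
`∇(Σ aᵢ mᵢ)`. Applied to `Σ m_A a m_M`, flatness turns its leading term into `a ∇m`, which
cancels against `∇(a m)`, so `∇(m·a) = 1 ⊗ m·a − a ⊗ m + Σ m_A a ⊗ m_M`. Substituting this into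
the definition of `(m·a)·b` leaves `m·(ab)`. -/

open TensorProduct

variable (K A M : Type*) [Field K] [Ring A] [Algebra K A]
  [AddCommGroup M] [Module K M] [Module A M] [IsScalarTower K A M]

/-- The action map `A ⊗ M → M`, `a ⊗ m ↦ a • m`. -/
noncomputable def actMap : A ⊗[K] M →ₗ[K] M :=
  TensorProduct.lift (LinearMap.mk₂ K (fun a m => a • m)
    (fun a b m => add_smul a b m)
    (fun k a m => smul_assoc k a m)
    (fun a m n => smul_add a m n)
    (fun k a m => (smul_comm k a m).symm))

/-- Left multiplication by `a : A` on a left `A`-module, as a `K`-linear map. -/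
def lsmulMap (a : A) : M →ₗ[K] M where
  toFun := fun m => a • m
  map_add' := fun x y => smul_add a x y
  map_smul' := fun k m => (smul_comm k a m).symm

/-- `a ↦ a • n` as a `K`-linear map `A → M`. -/
def smulBy (n : M) : A →ₗ[K] M where
  toFun := fun a => a • n
  map_add' := fun a b => add_smul a b n
  map_smul' := fun k a => smul_assoc k a n

/-- `D : M → A ⊗ M` is a connection with respect to the universal differential
calculus. -/
def IsConnection (D : M →ₗ[K] A ⊗[K] M) : Prop :=
  (∀ m : M, actMap K A M (D m) = 0) ∧
  ∀ (a : A) (m : M),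
    D (a • m) = LinearMap.rTensor M (LinearMap.mulLeft K a) (D m)
      + (1 : A) ⊗ₜ[K] (a • m) - a ⊗ₜ[K] m

/-- Flatness of a connection: `Σ 1 ⊗ m_A ⊗ m_M = Σ m_A ⊗ D(m_M)`. -/
def IsFlatConnection (D : M →ₗ[K] A ⊗[K] M) : Prop :=
  ∀ m : M, (1 : A) ⊗ₜ[K] (D m) = LinearMap.lTensor A D (D m)

/-- The induced right operation `m·a := a m − Σ m_A a m_M`. -/
noncomputable def rop (D : M →ₗ[K] A ⊗[K] M) (m : M) (a : A) : M :=
  a • m - actMap K A M (LinearMap.rTensor M (LinearMap.mulRight K a) (D m))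

open LinearMap

section

variable {K A M : Type*} [CommSemiring K] [Semiring A] [Algebra K A]
  [AddCommMonoid M] [Module K M]

lemma rTensor_mulLeft_eq_smul (a : A) (t : A ⊗[K] M) :
    rTensor M (mulLeft K a) t = a • t := by
  induction t using TensorProduct.induction_on with
  | zero => simp
  | tmul x n => simp [smul_tmul']
  | add u v hu hv => simp only [smul_add, map_add, hu, hv]

lemma rTensor_mulRight_smul (a b : A) (t : A ⊗[K] M) :
    rTensor M (mulRight K b) (a • t) = a • rTensor M (mulRight K b) t := by
  induction t using TensorProduct.induction_on with
  | zero => simp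
  | tmul x n => simp [smul_tmul', mul_assoc]
  | add u v hu hv => simp only [smul_add, map_add, hu, hv]

lemma rTensor_mulRight_mul (a b : A) (t : A ⊗[K] M) :
    rTensor M (mulRight K (a * b)) t = rTensor M (mulRight K b) (rTensor M (mulRight K a) t) := by
  rw [mulRight_mul, rTensor_comp_apply]

end

section

variable {K A M : Type*} [Field K] [Ring A] [Algebra K A] [AddCommGroup M] [Module K M]
  {D : M →ₗ[K] A ⊗[K] M}

@[simp]
lemma actMap_tmul {N : Type*} [AddCommGroup N] [Module K N] [Module A N] [IsScalarTower K A N]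
    (a : A) (n : N) : actMap K A N (a ⊗ₜ[K] n) = a • n := rfl

lemma IsFlatConnection.actMap_lTensor_rTensor_mulRight (hflat : IsFlatConnection K A M D)
    (a : A) (m : M) :
    actMap K A (A ⊗[K] M) (lTensor A D (rTensor M (mulRight K a) (D m))) = a • D m := by
  have hcomm : lTensor A D (rTensor M (mulRight K a) (D m)) =
      rTensor (A ⊗[K] M) (mulRight K a) (lTensor A D (D m)) := by
    rw [← comp_apply, lTensor_comp_rTensor, ← rTensor_comp_lTensor, comp_apply]
  rw [hcomm, ← hflat m, rTensor_tmul, mulRight_apply, one_mul, actMap_tmul]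

variable [Module A M] [IsScalarTower K A M]

lemma actMap_smul (a : A) (t : A ⊗[K] M) : actMap K A M (a • t) = a • actMap K A M t := by
  induction t using TensorProduct.induction_on with
  | zero => simp
  | tmul x n => simp [smul_tmul', mul_smul]
  | add u v hu hv => simp only [smul_add, map_add, hu, hv]

lemma IsConnection.map_smul (hD : IsConnection K A M D) (a : A) (m : M) :
    D (a • m) = a • D m + (1 : A) ⊗ₜ[K] (a • m) - a ⊗ₜ[K] m := by
  rw [hD.2, rTensor_mulLeft_eq_smul]

lemma IsConnection.map_actMap (hD : IsConnection K A M D) (t : A ⊗[K] M) :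
    D (actMap K A M t) =
      actMap K A (A ⊗[K] M) (lTensor A D t) + (1 : A) ⊗ₜ[K] actMap K A M t - t := by
  induction t using TensorProduct.induction_on with
  | zero => simp
  | tmul x n => simp [hD.map_smul]
  | add u v hu hv =>
    rw [map_add, map_add, hu, hv, map_add, map_add, tmul_add]
    abel

lemma IsConnection.map_rop (hD : IsConnection K A M D) (hflat : IsFlatConnection K A M D)
    (m : M) (a : A) :
    D (rop K A M D m a) =
      (1 : A) ⊗ₜ[K] rop K A M D m a - a ⊗ₜ[K] m + rTensor M (mulRight K a) (D m) := by
  rw [rop, map_sub, hD.map_smul, hD.map_actMap, hflat.actMap_lTensor_rTensor_mulRight, tmul_sub]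
  abel

lemma IsConnection.rop_one (hD : IsConnection K A M D) (m : M) : rop K A M D m 1 = m := by
  simp [rop, hD.1]

lemma IsConnection.rop_rop (hD : IsConnection K A M D) (hflat : IsFlatConnection K A M D)
    (m : M) (a b : A) : rop K A M D (rop K A M D m a) b = rop K A M D m (a * b) := by
  rw [rop, hD.map_rop hflat, rop, rop, rTensor_mulRight_mul]
  simp only [map_add, map_sub, rTensor_tmul, mulRight_apply, one_mul, actMap_tmul, mul_smul]
  abel

lemma IsConnection.rop_smul (hD : IsConnection K A M D) (a b : A) (m : M) :
    rop K A M D (a • m) b = a • rop K A M D m b := by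
  rw [rop, hD.map_smul, rop]
  simp only [map_add, map_sub, rTensor_mulRight_smul, actMap_smul, rTensor_tmul, mulRight_apply,
    one_mul, actMap_tmul, smul_sub, mul_smul]
  abel

end

theorem flat_connection_gives_bimodule (D : M →ₗ[K] A ⊗[K] M)
    (hconn : IsConnection K A M D) (hflat : IsFlatConnection K A M D) :
    (∀ m : M, rop K A M D m 1 = m) ∧
    (∀ (a b : A) (m : M), rop K A M D (rop K A M D m a) b = rop K A M D m (a * b)) ∧
    (∀ (a b : A) (m : M), rop K A M D (a • m) b = a • rop K A M D m b) :=
  ⟨hconn.rop_one, fun a b m => hconn.rop_rop hflat m a b, fun a b m => hconn.rop_smul a b m⟩
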